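/- If a metric space X is the union of two subspaces A and B, X = A ∪ B, then asdim(A ∪ B) ≤ max{asdim A, asdim B}. -/

import Mathlib

open Metric Set

noncomputable section

/-- The word length of `g` with respect to a symmetrized generating set `S ∪ S⁻¹`. -/
noncomputable def wordLength {G : Type*} [Group G] (S : Set G) (g : G) : ℕ :=
  sInf {n : ℕ | ∃ l : List G, l.length = n ∧ (∀ x ∈ l, x ∈ S ∨ x⁻¹ ∈ S) ∧ l.prod = g}

/-- The word metric on a group with respect to a generating set `S`. -/
noncomputable def wordDist {G : Type*} [Group G] (S : Set G) (a b : G) : ℝ :=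
  (wordLength S (a⁻¹ * b) : ℝ)

/-- `AsdimLE d n` : the space with distance function `d` has asymptotic dimension at most `n`:
for every `D > 0` there are `B ≥ 0` and families `U 0, ..., U n` of subsets covering the space,
all of whose members have diameter at most `B`, and such that distinct members of the same
family are at mutual distance greater than `D`. -/
def AsdimLE {X : Type*} (d : X → X → ℝ) (n : ℕ) : Prop :=
  ∀ D : ℝ, 0 < D → ∃ B : ℝ, 0 ≤ B ∧ ∃ U : Fin (n + 1) → Set (Set X),
    (∀ x : X, ∃ i : Fin (n + 1), ∃ u ∈ U i, x ∈ u) ∧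
    (∀ i : Fin (n + 1), ∀ u ∈ U i, ∀ x ∈ u, ∀ y ∈ u, d x y ≤ B) ∧
    (∀ i : Fin (n + 1), ∀ u ∈ U i, ∀ v ∈ U i, u ≠ v → ∀ x ∈ u, ∀ y ∈ v, D < d x y)

/-- The asymptotic dimension of a space with distance function `d`, in `ℕ∞`. -/
noncomputable def asdimD {X : Type*} (d : X → X → ℝ) : ℕ∞ :=
  ⨅ (n : ℕ) (_ : AsdimLE d n), (n : ℕ∞)

/-- The asymptotic dimension of a pseudometric space. -/
noncomputable def asdim (X : Type*) [PseudoMetricSpace X] : ℕ∞ :=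
  asdimD (fun x y : X => dist x y)

lemma asdimLE_mono {X : Type*} {d : X → X → ℝ} {m n : ℕ} (hmn : m ≤ n)
    (h : AsdimLE d m) : AsdimLE d n := by
  intro D hD
  obtain ⟨B, hB, U, hc, hdm, hs⟩ := h D hD
  refine ⟨B, hB, fun i => if h' : (i : ℕ) < m + 1 then U ⟨i, h'⟩ else ∅, ?_, ?_, ?_⟩
  · intro x
    obtain ⟨i, u, hu, hxu⟩ := hc x
    refine ⟨⟨i, by omega⟩, u, ?_, hxu⟩
    simpa [Nat.le_of_lt_succ i.isLt] using hu
  · intro i u hu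
    by_cases h' : (i : ℕ) < m + 1
    · simp only [dif_pos h'] at hu; exact hdm _ u hu
    · simp only [dif_neg h'] at hu; exact absurd hu (Set.notMem_empty u)
  · intro i u hu v hv
    by_cases h' : (i : ℕ) < m + 1
    · simp only [dif_pos h'] at hu hv; exact hs _ u hu v hv
    · simp only [dif_neg h'] at hu; exact absurd hu (Set.notMem_empty u)

lemma exists_min_asdim {X : Type*} (d : X → X → ℝ) (h : asdimD d ≠ ⊤) :
    ∃ n : ℕ, AsdimLE d n ∧ (n : ℕ∞) ≤ asdimD d := by
  have hne : {n : ℕ | AsdimLE d n}.Nonempty := by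
    by_contra hc
    rw [Set.not_nonempty_iff_eq_empty] at hc
    apply h
    unfold asdimD
    rw [iInf_eq_top]
    intro n
    rw [iInf_eq_top]
    intro hn
    exact absurd (Set.eq_empty_iff_forall_notMem.mp hc n) (not_not_intro hn)
  refine ⟨sInf {n | AsdimLE d n}, Nat.sInf_mem hne, ?_⟩
  exact le_iInf₂ fun k hk => Nat.cast_le.mpr (Nat.sInf_le hk)

lemma asdimLE_union {X : Type*} [PseudoMetricSpace X] (A B : Set X) (h : A ∪ B = Set.univ)
    (n : ℕ) (hA : AsdimLE (fun x y : ↥A => dist x y) n)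
    (hB : AsdimLE (fun x y : ↥B => dist x y) n) :
    AsdimLE (fun x y : X => dist x y) n := by
  classical
  intro D hD
  obtain ⟨R, hR0, U, hUcov, hUdiam, hUsep⟩ := hA D hD
  obtain ⟨S, hS0, V, hVcov, hVdiam, hVsep⟩ := hB (3 * D + 2 * R) (by linarith)
  -- a family `u ∈ U i` is "free" if it is D-separated from every member of `V i`
  set Free : Fin (n + 1) → Set ↥A → Prop := fun i u =>
    ∀ v ∈ V i, ∀ x ∈ u, ∀ y ∈ v, D < dist (x : X) (y : X) with hFree
  -- the enlargement of `v ∈ V i` by all non-free members of `U i` captured near it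
  set tl : Fin (n + 1) → Set ↥B → Set X := fun i v =>
    (Subtype.val '' v) ∪
      ⋃ u ∈ {u | u ∈ U i ∧ ∃ x ∈ u, ∃ y ∈ v, dist (x : X) (y : X) ≤ D}, Subtype.val '' u
    with htl
  set W : Fin (n + 1) → Set (Set X) := fun i =>
    {s | ∃ v ∈ V i, s = tl i v} ∪ {s | ∃ u ∈ U i, Free i u ∧ s = Subtype.val '' u} with hW
  have key : ∀ i, ∀ v ∈ V i, ∀ x ∈ tl i v, ∃ q ∈ v, dist x (q : X) ≤ R + D := by
    intro i v hv x hx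
    rcases hx with hx | hx
    · obtain ⟨q, hq, rfl⟩ := hx
      exact ⟨q, hq, by simp; linarith⟩
    · simp only [mem_iUnion] at hx
      obtain ⟨u, ⟨hu, p, hp, q, hq, hpq⟩, a, ha, rfl⟩ := hx
      refine ⟨q, hq, ?_⟩
      have h1 : dist (a : X) (p : X) ≤ R := by
        have := hUdiam i u hu a ha p hp
        exact (by simpa [Subtype.dist_eq] using this)
      calc dist (a : X) (q : X) ≤ dist (a : X) (p : X) + dist (p : X) (q : X) := dist_triangle _ _ _
        _ ≤ R + D := add_le_add h1 hpq
  refine ⟨S + 2 * R + 2 * D, by linarith, W, ?_, ?_, ?_⟩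
  · -- covering
    intro x
    have hx : x ∈ A ∪ B := h ▸ Set.mem_univ x
    rcases hx with hxA | hxB
    · obtain ⟨i, u, hu, hxu⟩ := hUcov ⟨x, hxA⟩
      by_cases hf : Free i u
      · exact ⟨i, Subtype.val '' u, Or.inr ⟨u, hu, hf, rfl⟩, ⟨_, hxu, rfl⟩⟩
      · have hf2 : ∃ v ∈ V i, ∃ p ∈ u, ∃ q ∈ v, dist (p : X) (q : X) ≤ D := by
          by_contra hc
          push_neg at hc
          exact hf fun v hv p hp q hq => hc v hv p hp q hq
        obtain ⟨v, hv, p, hp, q, hq, hpq⟩ := hf2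
        refine ⟨i, tl i v, Or.inl ⟨v, hv, rfl⟩, Or.inr ?_⟩
        simp only [mem_iUnion]
        exact ⟨u, ⟨hu, p, hp, q, hq, hpq⟩, ⟨x, hxA⟩, hxu, rfl⟩
    · obtain ⟨i, v, hv, hxv⟩ := hVcov ⟨x, hxB⟩
      exact ⟨i, tl i v, Or.inl ⟨v, hv, rfl⟩, Or.inl ⟨_, hxv, rfl⟩⟩
  · -- diameter
    intro i s hs x hx y hy
    show dist x y ≤ S + 2 * R + 2 * D
    rcases hs with ⟨v, hv, rfl⟩ | ⟨u, hu, _, rfl⟩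
    · obtain ⟨q, hq, hxq⟩ := key i v hv x hx
      obtain ⟨q', hq', hyq⟩ := key i v hv y hy
      have hqq : dist (q : X) (q' : X) ≤ S := by
        have := hVdiam i v hv q hq q' hq'
        exact (by simpa [Subtype.dist_eq] using this)
      have t := dist_triangle4 x (q : X) (q' : X) y
      have c1 := dist_comm x (q : X)
      have c2 := dist_comm (q' : X) y
      have c3 := dist_comm y (q' : X)
      linarith
    · obtain ⟨a, ha, rfl⟩ := hx
      obtain ⟨b, hb, rfl⟩ := hy
      have : dist (a : X) (b : X) ≤ R := by simpa [Subtype.dist_eq] using hUdiam i u hu a ha b hb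
      linarith
  · -- separation
    intro i s hs t ht hst x hx y hy
    show D < dist x y
    have sep_tl_free : ∀ v ∈ V i, ∀ u ∈ U i, Free i u →
        ∀ x ∈ tl i v, ∀ y ∈ Subtype.val '' u, D < dist x y := by
      intro v hv u hu hf x hx y hy
      obtain ⟨b, hb, rfl⟩ := hy
      rcases hx with hx | hx
      · obtain ⟨q, hq, rfl⟩ := hx
        have := hf v hv b hb q hq
        rw [dist_comm]
        exact this
      · simp only [mem_iUnion] at hx
        obtain ⟨u', ⟨hu', p, hp, q, hq, hpq⟩, a, ha, rfl⟩ := hx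
        have hne : u' ≠ u := by
          rintro rfl
          exact absurd hpq (not_le.mpr (hf v hv p hp q hq))
        have := hUsep i u' hu' u hu hne a ha b hb
        exact (by simpa [Subtype.dist_eq] using this)
    rcases hs with ⟨v, hv, rfl⟩ | ⟨u, hu, hf, rfl⟩
    · rcases ht with ⟨v', hv', rfl⟩ | ⟨u', hu', hf', rfl⟩
      · have hne : v ≠ v' := by rintro rfl; exact hst rfl
        obtain ⟨q, hq, hxq⟩ := key i v hv x hx
        obtain ⟨q', hq', hyq⟩ := key i v' hv' y hy
        have hsep : 3 * D + 2 * R < dist (q : X) (q' : X) := by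
          have := hVsep i v hv v' hv' hne q hq q' hq'
          exact (by simpa [Subtype.dist_eq] using this)
        have t1 := dist_triangle (q : X) x (q' : X)
        have t2 := dist_triangle x y (q' : X)
        have c1 := dist_comm (q : X) x
        have c2 := dist_comm y (q' : X)
        linarith
      · exact sep_tl_free v hv u' hu' hf' x hx y hy
    · rcases ht with ⟨v', hv', rfl⟩ | ⟨u', hu', hf', rfl⟩
      · have := sep_tl_free v' hv' u hu hf y hy x hx
        rwa [dist_comm] at this
      · have hne : u ≠ u' := by
          rintro rfl; exact hst rfl
        obtain ⟨a, ha, rfl⟩ := hx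
        obtain ⟨b, hb, rfl⟩ := hy
        have := hUsep i u hu u' hu' hne a ha b hb
        exact (by simpa [Subtype.dist_eq] using this)

/-- Finite union theorem: if `X = A ∪ B` then
`asdim X ≤ max (asdim A) (asdim B)`, the subspaces carrying the induced metric. -/
theorem stmt3 {X : Type*} [PseudoMetricSpace X] (A B : Set X) (h : A ∪ B = Set.univ) :
    asdim X ≤ max (asdim A) (asdim B) := by
  rcases eq_or_ne (asdim A) ⊤ with hTA | hTA
  · simp [hTA]
  rcases eq_or_ne (asdim B) ⊤ with hTB | hTB
  · simp [hTB]
  obtain ⟨nA, hnA, hleA⟩ := exists_min_asdim (fun x y : ↥A => dist x y) hTA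
  obtain ⟨nB, hnB, hleB⟩ := exists_min_asdim (fun x y : ↥B => dist x y) hTB
  have hX : AsdimLE (fun x y : X => dist x y) (max nA nB) :=
    asdimLE_union A B h _ (asdimLE_mono (le_max_left _ _) hnA)
      (asdimLE_mono (le_max_right _ _) hnB)
  have h1 : asdim X ≤ ((max nA nB : ℕ) : ℕ∞) := iInf₂_le _ hX
  refine h1.trans ?_
  rcases le_total nA nB with hab | hab
  · rw [max_eq_right hab]; exact le_trans hleB (le_max_right _ _)
  · rw [max_eq_left hab]; exact le_trans hleA (le_max_left _ _)
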